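/- Let ℓ, γ, m ∈ ℕ with γ ≥ 1, identify the state space with (ℝ^ℓ)^γ writing x = (ζ₁,…,ζ_γ), let f_γ : (ℝ^ℓ)^γ → ℝ^ℓ and g_γ : (ℝ^ℓ)^γ → Matrix (Fin ℓ) (Fin m) ℝ, and define V(x,u) ∈ (ℝ^ℓ)^γ by V(x,u)_i = ζ_{i+1} for 1 ≤ i ≤ γ−1 and V(x,u)_γ = f_γ(x) + g_γ(x)·u. Let q ∈ ℕ with 1 ≤ q ≤ γ, set p = γ − q + 1, fix h > 0, weights b₁,…,b_p ∈ ℝ with Σᵢ bᵢ = 1 and coefficients a_{i,j} ∈ ℝ (1 ≤ j < i ≤ p), and let F^{a,p}_h(x,u) = x + h Σ_{i=1}^{p} bᵢ V(zᵢ,u) with z₁ = x and zᵢ = x + h Σ_{j=1}^{i−1} a_{i,j} V(z_j,u). Then for every fixed x ∈ (ℝ^ℓ)^γ: the blocks (F^{a,p}_h(x,u))_i for i ∈ {1,…,q−1} do not depend on u, and the block u ↦ (F^{a,p}_h(x,u))_q is an affine function of u ∈ ℝᵐ. -/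

import Mathlib

/-- Matrix–vector multiplication as a map between Euclidean spaces. -/
noncomputable def mulVecE {n m : ℕ} (g : Matrix (Fin n) (Fin m) ℝ)
    (u : EuclideanSpace ℝ (Fin m)) : EuclideanSpace ℝ (Fin n) :=
  (WithLp.equiv 2 (Fin n → ℝ)).symm (g.mulVec ((WithLp.equiv 2 (Fin m → ℝ)) u))

/-- The controlled block chain-of-integrators vector field:
`V(x,u)_i = x_{i+1}` for `i < γ−1` and `V(x,u)_{γ−1} = f_γ(x) + g_γ(x)·u` (0-indexed). -/
noncomputable def chainVF {ℓ γ m : ℕ}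
    (fγ : (Fin γ → EuclideanSpace ℝ (Fin ℓ)) → EuclideanSpace ℝ (Fin ℓ))
    (gγ : (Fin γ → EuclideanSpace ℝ (Fin ℓ)) → Matrix (Fin ℓ) (Fin m) ℝ)
    (x : Fin γ → EuclideanSpace ℝ (Fin ℓ)) (u : EuclideanSpace ℝ (Fin m)) :
    Fin γ → EuclideanSpace ℝ (Fin ℓ) :=
  fun i => if hi : (i : ℕ) + 1 < γ then x ⟨(i : ℕ) + 1, hi⟩ else fγ x + mulVecE (gγ x) u

/-- Runge–Kutta stage points (0-indexed): `z 0 = x`,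
`z i = x + h • Σ_{j<i} a i j • v j (z j)`. -/
noncomputable def rkStages {S : Type*} [AddCommGroup S] [Module ℝ S]
    (v : ℕ → S → S) (a : ℕ → ℕ → ℝ) (h : ℝ) (x : S) : ℕ → S :=
  fun i => Nat.strongRec (fun i ih =>
    x + h • ∑ j ∈ (Finset.range i).attach, a i j.1 • v j.1 (ih j.1 (Finset.mem_range.mp j.2))) i

/-- The `p`-stage Runge–Kutta map for the block chain-of-integrators dynamics. -/
noncomputable def rkMapChain {ℓ γ m : ℕ}
    (fγ : (Fin γ → EuclideanSpace ℝ (Fin ℓ)) → EuclideanSpace ℝ (Fin ℓ))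
    (gγ : (Fin γ → EuclideanSpace ℝ (Fin ℓ)) → Matrix (Fin ℓ) (Fin m) ℝ)
    (p : ℕ) (b : ℕ → ℝ) (a : ℕ → ℕ → ℝ) (h : ℝ)
    (x : Fin γ → EuclideanSpace ℝ (Fin ℓ)) (u : EuclideanSpace ℝ (Fin m)) :
    Fin γ → EuclideanSpace ℝ (Fin ℓ) :=
  x + h • ∑ i ∈ Finset.range p,
    b i • chainVF fγ gγ (rkStages (fun _ z => chainVF fγ gγ z u) a h x i) u

/-! Block `k` of `V(z, u)` is block `k + 1` of `z` as long as `k + 1 < γ`, and only the last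
block sees `u`, through `f_γ(z) + g_γ(z) u`. Each stage `z_j` is `x` plus a combination of the
`V(z_i, u)` with `i < j`, so by induction on `j` block `k` of `V(z_j, u)` is independent of `u`
when `k + j + 1 < γ`, and affine in `u` when `k + j < γ` (the extreme case being the last block
of `V(z_0, u) = V(x, u)`). Both classes of functions of `u` are subspaces containing the
constants, hence stable under the Runge–Kutta combinations, and `F^{a,p}_h` only involves the
stages `j < p = γ - q + 1`. -/

open Finset

section FunctionSubspaces

variable (E F : Type*) [AddCommGroup F] [Module ℝ F]

def constFunctions : Submodule ℝ (E → F) where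
  carrier := {f | ∀ u u', f u = f u'}
  add_mem' hf hg u u' := by simp only [Pi.add_apply, hf u u', hg u u']
  zero_mem' _ _ := rfl
  smul_mem' c _ hf u u' := by simp only [Pi.smul_apply, hf u u']

def affineFunctions [AddCommGroup E] [Module ℝ E] : Submodule ℝ (E → F) where
  carrier := {f | ∃ (w₀ : F) (W : E →ₗ[ℝ] F), ∀ u, f u = w₀ + W u}
  add_mem' := by
    rintro f g ⟨v, V, hf⟩ ⟨w, W, hg⟩
    exact ⟨v + w, V + W, fun u => by simp only [Pi.add_apply, hf, hg, LinearMap.add_apply]; abel⟩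
  zero_mem' := ⟨0, 0, fun _ => by simp⟩
  smul_mem' := by
    rintro c f ⟨w, W, hf⟩
    exact ⟨c • w, c • W, fun u => by simp [hf]⟩

variable {E F}

lemma const_mem_constFunctions (w : F) : (fun _ : E => w) ∈ constFunctions E F :=
  fun _ _ => rfl

lemma const_mem_affineFunctions [AddCommGroup E] [Module ℝ E] (w : F) :
    (fun _ : E => w) ∈ affineFunctions E F :=
  ⟨w, 0, fun _ => by simp⟩

end FunctionSubspaces

lemma rkStages_eq {S : Type*} [AddCommGroup S] [Module ℝ S]
    (v : ℕ → S → S) (a : ℕ → ℕ → ℝ) (h : ℝ) (x : S) (i : ℕ) :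
    rkStages v a h x i = x + h • ∑ j ∈ range i, a i j • v j (rkStages v a h x j) := by
  rw [rkStages, Nat.strongRec_eq, ← sum_attach (range i)]
  rfl

lemma rkStages_zero {S : Type*} [AddCommGroup S] [Module ℝ S]
    (v : ℕ → S → S) (a : ℕ → ℕ → ℝ) (h : ℝ) (x : S) :
    rkStages v a h x 0 = x := by
  rw [rkStages_eq]
  simp

section ChainRK

variable {ℓ γ m : ℕ}
  (fγ : (Fin γ → EuclideanSpace ℝ (Fin ℓ)) → EuclideanSpace ℝ (Fin ℓ))
  (gγ : (Fin γ → EuclideanSpace ℝ (Fin ℓ)) → Matrix (Fin ℓ) (Fin m) ℝ)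

lemma chainVF_apply_of_succ_lt (z : Fin γ → EuclideanSpace ℝ (Fin ℓ))
    (u : EuclideanSpace ℝ (Fin m)) {k : ℕ} (hk : k + 1 < γ) :
    chainVF fγ gγ z u ⟨k, by omega⟩ = z ⟨k + 1, hk⟩ :=
  dif_pos hk

lemma chainVF_apply_mem_affineFunctions (z : Fin γ → EuclideanSpace ℝ (Fin ℓ)) (k : Fin γ) :
    (fun u => chainVF fγ gγ z u k) ∈ affineFunctions _ _ := by
  by_cases hk : (k : ℕ) + 1 < γ
  · simp only [chainVF, dif_pos hk]
    exact const_mem_affineFunctions _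
  · simp only [chainVF, dif_neg hk]
    exact ⟨fγ z, Matrix.toLpLin 2 2 (gγ z), fun _ => rfl⟩

lemma rkSum_apply_mem {S : Submodule ℝ (EuclideanSpace ℝ (Fin m) → EuclideanSpace ℝ (Fin ℓ))}
    (hS : ∀ w, (fun _ => w) ∈ S) (h : ℝ) (x : Fin γ → EuclideanSpace ℝ (Fin ℓ))
    (Z : EuclideanSpace ℝ (Fin m) → ℕ → Fin γ → EuclideanSpace ℝ (Fin ℓ)) (c : ℕ → ℝ) (n : ℕ)
    (k : Fin γ) (hZ : ∀ j < n, (fun u => chainVF fγ gγ (Z u j) u k) ∈ S) :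
    (fun u => (x + h • ∑ j ∈ range n, c j • chainVF fγ gγ (Z u j) u) k) ∈ S := by
  convert S.add_mem (hS (x k)) (S.smul_mem h (S.sum_mem fun j hj => S.smul_mem (c j)
    (hZ j (mem_range.mp hj)))) using 1
  funext u
  simp only [Pi.add_apply, Pi.smul_apply, Finset.sum_apply]

variable (a : ℕ → ℕ → ℝ) (h : ℝ) (x : Fin γ → EuclideanSpace ℝ (Fin ℓ))

lemma chainVF_rkStages_apply_mem_constFunctions (j k : ℕ) (hjk : k + j + 1 < γ) :
    (fun u => chainVF fγ gγ (rkStages (fun _ z => chainVF fγ gγ z u) a h x j) u ⟨k, by omega⟩)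
      ∈ constFunctions _ _ := by
  induction j using Nat.strong_induction_on generalizing k with
  | _ j ih =>
    have hk : k + 1 < γ := by omega
    simp only [chainVF_apply_of_succ_lt fγ gγ _ _ hk, rkStages_eq _ a h x j]
    exact rkSum_apply_mem fγ gγ const_mem_constFunctions h x _ (a j) j _
      fun i hi => ih i hi (k + 1) (by omega)

lemma chainVF_rkStages_apply_mem_affineFunctions (j k : ℕ) (hjk : k + j < γ) :
    (fun u => chainVF fγ gγ (rkStages (fun _ z => chainVF fγ gγ z u) a h x j) u ⟨k, by omega⟩)
      ∈ affineFunctions _ _ := by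
  induction j using Nat.strong_induction_on generalizing k with
  | _ j ih =>
    by_cases hk : k + 1 < γ
    · simp only [chainVF_apply_of_succ_lt fγ gγ _ _ hk, rkStages_eq _ a h x j]
      exact rkSum_apply_mem fγ gγ const_mem_affineFunctions h x _ (a j) j _
        fun i hi => ih i hi (k + 1) (by omega)
    · obtain rfl : j = 0 := by omega
      simp only [rkStages_zero]
      exact chainVF_apply_mem_affineFunctions fγ gγ x _

end ChainRK

theorem stmt17 {ℓ γ m : ℕ}
    (fγ : (Fin γ → EuclideanSpace ℝ (Fin ℓ)) → EuclideanSpace ℝ (Fin ℓ))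
    (gγ : (Fin γ → EuclideanSpace ℝ (Fin ℓ)) → Matrix (Fin ℓ) (Fin m) ℝ)
    (q : ℕ) (hq1 : 1 ≤ q) (hqγ : q ≤ γ) (p : ℕ) (hpdef : p = γ - q + 1)
    (h : ℝ)
    (b : ℕ → ℝ) (a : ℕ → ℕ → ℝ)
    (x : Fin γ → EuclideanSpace ℝ (Fin ℓ)) :
    (∀ i : Fin γ, (i : ℕ) < q - 1 → ∀ u u' : EuclideanSpace ℝ (Fin m),
      rkMapChain fγ gγ p b a h x u i = rkMapChain fγ gγ p b a h x u' i) ∧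
    ∃ w0 : EuclideanSpace ℝ (Fin ℓ),
      ∃ W : EuclideanSpace ℝ (Fin m) →ₗ[ℝ] EuclideanSpace ℝ (Fin ℓ),
        ∀ u : EuclideanSpace ℝ (Fin m),
          rkMapChain fγ gγ p b a h x u ⟨q - 1, by omega⟩ = w0 + W u := by
  subst hpdef
  constructor
  · rintro ⟨k, hk⟩ (hkq : k < q - 1)
    exact rkSum_apply_mem fγ gγ const_mem_constFunctions h x _ b _ _
      fun j hj => chainVF_rkStages_apply_mem_constFunctions fγ gγ a h x j k (by omega)
  · exact rkSum_apply_mem fγ gγ const_mem_affineFunctions h x _ b _ _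
      fun j hj => chainVF_rkStages_apply_mem_affineFunctions fγ gγ a h x j (q - 1) (by omega)
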